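/- arXiv:math/0108073 — 3 statements merged into one kernel-verified Lean document; each statement's English description precedes it below -/
import Mathlib

section
/- Under the hypotheses of the previous integral identity, if f satisfies |f(s)| ≤ C(|s| + |A s^{1−ν}| + |B s^ν|)^n on the path L(x), then ∫_{L(x)} |f(s)|/|s| |ds| ≤ (C·P/(n·min(ν*, 1−ν*))) (|x| + |A x^{1−ν}| + |B x^ν|)^n. -/
open MeasureTheory

/-!
Along the spiral `s(ρ) = ρ · exp(i(θ + k log(ρ/r)))` the modulus of `s^c` is
`(ρ/r)^(Re c − k Im c) · |x^c|` with `x = s(r)`, and the slope `k = (Re ν − ν*)/Im ν` makes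
the exponents of `s^{1−ν}` and `s^ν` equal to `1 − ν*` and `ν*`. Hence the bracket of the
growth bound decays at least like `(ρ/r)^μ` with `μ = min(ν*, 1 − ν*)`, the integrand is
dominated by a multiple of `(ρ/r)^{nμ}/ρ`, and `∫₀^r (ρ/r)^p dρ/ρ = 1/p`.
-/

section SpiralPath

open Complex

theorem norm_mul_cexp_mul_spiral (c w : ℂ) (θ k : ℝ) {r ρ : ℝ} (hr : 0 < r) (hρ : 0 < ρ) :
    ‖w * exp (c * (Real.log ρ + (θ + k * Real.log (ρ / r)) * I))‖ =
      (ρ / r) ^ (c.re - c.im * k) * ‖w * exp (c * (Real.log r + θ * I))‖ := by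
  simp only [norm_mul, norm_exp, mul_re, add_re, add_im, mul_im, ofReal_re, ofReal_im,
    I_re, I_im]
  rw [Real.rpow_def_of_pos (div_pos hρ hr), Real.log_div hρ.ne' hr.ne', mul_left_comm,
    ← Real.exp_add]
  congr 2
  ring

theorem re_sub_im_mul_div_im {ν : ℂ} (hν : ν.im ≠ 0) (νs : ℝ) :
    ν.re - ν.im * ((ν.re - νs) / ν.im) = νs := by
  field_simp
  ring

theorem one_sub_re_sub_im_mul_div_im {ν : ℂ} (hν : ν.im ≠ 0) (νs : ℝ) :
    (1 - ν).re - (1 - ν).im * ((ν.re - νs) / ν.im) = 1 - νs := by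
  have := re_sub_im_mul_div_im hν νs
  rw [sub_re, sub_im, one_re, one_im]
  linarith

end SpiralPath

theorem add_rpow_mul_add_rpow_mul_le {ρ r a b μ α β : ℝ} (hρ : 0 < ρ) (hρr : ρ ≤ r)
    (ha : 0 ≤ a) (hb : 0 ≤ b) (hμ : μ ≤ 1) (hα : μ ≤ α) (hβ : μ ≤ β) :
    ρ + (ρ / r) ^ α * a + (ρ / r) ^ β * b ≤ (ρ / r) ^ μ * (r + a + b) := by
  have hr : 0 < r := hρ.trans_le hρr
  have ht0 : 0 < ρ / r := div_pos hρ hr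
  have ht1 : ρ / r ≤ 1 := (div_le_one hr).2 hρr
  have hdecay : ∀ σ, μ ≤ σ → (ρ / r) ^ σ ≤ (ρ / r) ^ μ := fun σ hσ =>
    Real.rpow_le_rpow_of_exponent_ge ht0 ht1 hσ
  have hlin : ρ ≤ (ρ / r) ^ μ * r := by
    calc ρ = (ρ / r) ^ (1 : ℝ) * r := by rw [Real.rpow_one, div_mul_cancel₀ _ hr.ne']
      _ ≤ (ρ / r) ^ μ * r := mul_le_mul_of_nonneg_right (hdecay 1 hμ) hr.le
  have hA := mul_le_mul_of_nonneg_right (hdecay α hα) ha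
  have hB := mul_le_mul_of_nonneg_right (hdecay β hβ) hb
  linarith

theorem setLIntegral_Ioc_ofReal_mul_div_rpow_div {p r : ℝ} (hp : 0 < p) (hr : 0 < r) {K : ℝ}
    (hK : 0 ≤ K) :
    ∫⁻ ρ in Set.Ioc 0 r, ENNReal.ofReal (K * (ρ / r) ^ p / ρ) = ENNReal.ofReal (K / p) := by
  have hpow : Set.EqOn (fun ρ => ENNReal.ofReal (K * (ρ / r) ^ p / ρ))
      (fun ρ => ENNReal.ofReal (K / r ^ p * ρ ^ (p - 1))) (Set.Ioc 0 r) := by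
    intro ρ hρ
    simp only
    rw [Real.div_rpow hρ.1.le hr.le, Real.rpow_sub_one hρ.1.ne']
    congr 1
    ring
  have hint : IntegrableOn (fun ρ : ℝ => K / r ^ p * ρ ^ (p - 1)) (Set.Ioc 0 r) :=
    ((intervalIntegral.intervalIntegrable_rpow' (a := 0) (b := r)
      (by linarith : (-1 : ℝ) < p - 1)).1).const_mul _
  have hnonneg : 0 ≤ᵐ[volume.restrict (Set.Ioc 0 r)] fun ρ : ℝ => K / r ^ p * ρ ^ (p - 1) := by
    filter_upwards [ae_restrict_mem measurableSet_Ioc] with ρ hρ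
    have := hρ.1
    positivity
  rw [setLIntegral_congr_fun measurableSet_Ioc hpow,
    ← ofReal_integral_eq_lintegral_ofReal hint hnonneg, integral_const_mul,
    ← intervalIntegral.integral_of_le hr.le, integral_rpow (Or.inl (by linarith)),
    sub_add_cancel, Real.zero_rpow hp.ne', sub_zero]
  congr 1
  have := Real.rpow_pos_of_pos hr p
  field_simp

/-- If `f` satisfies `|f(s)| ≤ C(|s| + |A s^{1−ν}| + |B s^ν|)^n` on the spiral path `L(x)`
(parametrized by `ρ = |s| ∈ (0, |x|]`, with the continuous branch of the logarithm along the
path), then `∫_{L(x)} |f(s)|/|s| |ds| ≤ (C·P/(n·min(ν*,1−ν*))) (|x| + |A x^{1−ν}| + |B x^ν|)^n`,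
where `P = √(1 + ((Re ν − ν*)/Im ν)²)` and `|ds| = P dρ`. -/
theorem stmt_7 (ν : ℂ) (hν : ν.im ≠ 0) (A B : ℂ) (νs : ℝ) (hνs0 : 0 < νs) (hνs1 : νs < 1)
    (r : ℝ) (hr : 0 < r) (argx : ℝ) (f : ℝ → ℂ) (C : ℝ) (hC : 0 < C) (n : ℕ) (hn : 1 ≤ n)
    (hf : ∀ ρ ∈ Set.Ioc (0 : ℝ) r,
      ‖f ρ‖ ≤ C * (ρ +
        ‖A * Complex.exp ((1 - ν) *
          (Real.log ρ + (argx + (ν.re - νs) / ν.im * Real.log (ρ / r)) * Complex.I))‖ +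
        ‖B * Complex.exp (ν *
          (Real.log ρ + (argx + (ν.re - νs) / ν.im * Real.log (ρ / r)) * Complex.I))‖) ^ n) :
    (∫⁻ ρ in Set.Ioc (0 : ℝ) r,
        ENNReal.ofReal (‖f ρ‖ / ρ * Real.sqrt (1 + ((ν.re - νs) / ν.im) ^ 2)))
      ≤ ENNReal.ofReal
          (C * Real.sqrt (1 + ((ν.re - νs) / ν.im) ^ 2) / (n * min νs (1 - νs)) *
            (r + ‖A * Complex.exp ((1 - ν) * (Real.log r + argx * Complex.I))‖ +
              ‖B * Complex.exp (ν * (Real.log r + argx * Complex.I))‖) ^ n) := by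
  have hslope : ((ν.re : ℂ) - νs) / ν.im = (((ν.re - νs) / ν.im : ℝ) : ℂ) := by push_cast; rfl
  simp only [hslope] at hf
  set P := Real.sqrt (1 + ((ν.re - νs) / ν.im) ^ 2)
  set μ := min νs (1 - νs)
  set M := r + ‖A * Complex.exp ((1 - ν) * (Real.log r + argx * Complex.I))‖ +
    ‖B * Complex.exp (ν * (Real.log r + argx * Complex.I))‖
  have hμ : 0 < (n : ℝ) * μ := mul_pos (by exact_mod_cast hn) (lt_min hνs0 (by linarith))
  have hpt : ∀ ρ ∈ Set.Ioc 0 r, ‖f ρ‖ / ρ * P ≤ C * P * M ^ n * (ρ / r) ^ ((n : ℝ) * μ) / ρ := by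
    rintro ρ ⟨hρ0, hρr⟩
    have hbracket : ρ +
        ‖A * Complex.exp ((1 - ν) * (Real.log ρ +
          (argx + ((ν.re - νs) / ν.im : ℝ) * Real.log (ρ / r)) * Complex.I))‖ +
        ‖B * Complex.exp (ν * (Real.log ρ +
          (argx + ((ν.re - νs) / ν.im : ℝ) * Real.log (ρ / r)) * Complex.I))‖ ≤
        (ρ / r) ^ μ * M := by
      rw [norm_mul_cexp_mul_spiral _ _ _ _ hr hρ0, norm_mul_cexp_mul_spiral _ _ _ _ hr hρ0,
        one_sub_re_sub_im_mul_div_im hν, re_sub_im_mul_div_im hν]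
      exact add_rpow_mul_add_rpow_mul_le hρ0 hρr (norm_nonneg _) (norm_nonneg _)
        ((min_le_left _ _).trans hνs1.le) (min_le_right _ _) (min_le_left _ _)
    calc ‖f ρ‖ / ρ * P ≤ C * ((ρ / r) ^ μ * M) ^ n / ρ * P := by
          gcongr
          exact (hf ρ ⟨hρ0, hρr⟩).trans (by gcongr)
      _ = C * P * M ^ n * (ρ / r) ^ ((n : ℝ) * μ) / ρ := by
          rw [mul_comm (n : ℝ), Real.rpow_mul (div_pos hρ0 hr).le, Real.rpow_natCast, mul_pow]
          ring
  calc _ ≤ ∫⁻ ρ in Set.Ioc 0 r, ENNReal.ofReal (C * P * M ^ n * (ρ / r) ^ ((n : ℝ) * μ) / ρ) :=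
        setLIntegral_mono' measurableSet_Ioc fun ρ hρ => ENNReal.ofReal_le_ofReal (hpt ρ hρ)
    _ = ENNReal.ofReal (C * P * M ^ n / (n * μ)) :=
        setLIntegral_Ioc_ofReal_mul_div_rpow_div hμ hr (by positivity)
    _ = _ := by rw [mul_div_right_comm]
end

section
/- Let α, β, γ ∈ ℂ with α ≠ β, and r₁ ∈ ℂ, r₁ ≠ 0. Define B₀ as the 2×2 matrix with entries B₀₁₁ = α(β+1−γ)/(α−β), B₀₁₂ = r₁, B₀₂₁ = αβ(β+1−γ)(γ−1−α)/((α−β)² r₁), B₀₂₂ = β(γ−α−1)/(α−β), and B₁ = diag(−α,−β) − B₀. Then B₀ has eigenvalues 0 and 1−γ, B₁ has eigenvalues 0 and γ−α−β−1, and B₀+B₁ = diag(−α,−β). -/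
open Matrix

/-- Lemma A4 (direct part): with the explicit entries, `B₀` has eigenvalues `0, 1−γ`
(equivalently trace `1−γ` and determinant `0`), `B₁ := diag(−α,−β) − B₀` has eigenvalues
`0, γ−α−β−1`, and `B₀ + B₁ = diag(−α,−β)`. -/
theorem stmt_8 (α β γ r₁ : ℂ) (hαβ : α ≠ β) (hr : r₁ ≠ 0) :
    let B₀ : Matrix (Fin 2) (Fin 2) ℂ :=
      !![α * (β + 1 - γ) / (α - β), r₁;
         α * β * (β + 1 - γ) * (γ - 1 - α) / ((α - β) ^ 2 * r₁), β * (γ - α - 1) / (α - β)]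
    let B₁ : Matrix (Fin 2) (Fin 2) ℂ := Matrix.diagonal ![-α, -β] - B₀
    B₀.trace = 1 - γ ∧ B₀.det = 0 ∧
    B₁.trace = γ - α - β - 1 ∧ B₁.det = 0 ∧
    B₀ + B₁ = Matrix.diagonal ![-α, -β] := by
  intro B₀ B₁
  have hd : α - β ≠ 0 := sub_ne_zero.mpr hαβ
  have h0 : B₀ = !![α * (β + 1 - γ) / (α - β), r₁;
         α * β * (β + 1 - γ) * (γ - 1 - α) / ((α - β) ^ 2 * r₁), β * (γ - α - 1) / (α - β)] := rfl
  refine ⟨?_, ?_, ?_, ?_, ?_⟩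
  · simp [Matrix.trace_fin_two, h0]
    field_simp
    ring
  · simp [Matrix.det_fin_two, h0]
    field_simp
    ring
  · show (Matrix.diagonal ![-α, -β] - B₀).trace = _
    rw [Matrix.trace_sub]
    simp [Matrix.trace_fin_two, h0, Matrix.trace_diagonal]
    field_simp
    ring
  · show (Matrix.diagonal ![-α, -β] - B₀).det = _
    have : Matrix.diagonal ![-α, -β] - B₀ =
      !![-α - α * (β + 1 - γ) / (α - β), -r₁;
         -(α * β * (β + 1 - γ) * (γ - 1 - α) / ((α - β) ^ 2 * r₁)), -β - β * (γ - α - 1) / (α - β)] := by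
      rw [h0]
      ext i j
      fin_cases i <;> fin_cases j <;> simp [Matrix.diagonal]
    rw [this, Matrix.det_fin_two_of]
    field_simp
    ring
  · show B₀ + (Matrix.diagonal ![-α, -β] - B₀) = _
    abel
end

section
/- Conversely, any pair of 2×2 complex matrices B₀ (with eigenvalues 0, 1−γ), B₁ (with eigenvalues 0, γ−α−β−1) satisfying B₀ + B₁ = diag(−α,−β), where α ≠ β, γ ≠ 1, γ−α−β−1 ≠ 0, and B₀ has nonzero (1,2)-entry, is of the form given in Lemma A4 for some r₁ ≠ 0. -/
/-!
Write `D = diag(-α, -β)`. Both `B₀` and `B₁ = D - B₀` are singular, and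
`det (D - B₀) - det B₀ = αβ + α (B₀)₂₂ + β (B₀)₁₁` is affine in the diagonal of `B₀`. Together
with the trace condition this is a linear system for `(B₀)₁₁, (B₀)₂₂`, uniquely solvable since
`α ≠ β`. Then `det B₀ = 0` and `r₁ := (B₀)₁₂ ≠ 0` force `(B₀)₂₁ = (B₀)₁₁ (B₀)₂₂ / r₁`.
-/

open Matrix

namespace Matrix

variable {R K : Type*} [CommRing R] [Field K]

theorem det_diagonal_sub_fin_two (x y : R) (A : Matrix (Fin 2) (Fin 2) R) :
    (diagonal ![x, y] - A).det = x * y - x * A 1 1 - y * A 0 0 + A.det := by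
  simp only [det_fin_two, sub_apply, diagonal_apply_eq, diagonal_apply_ne _ zero_ne_one,
    diagonal_apply_ne _ one_ne_zero, cons_val_zero, cons_val_one, cons_val_fin_one]
  ring

theorem diag_fin_two_of_det_eq_zero_of_det_diagonal_sub_eq_zero {x y : K} (hxy : x ≠ y)
    {A : Matrix (Fin 2) (Fin 2) K} (h : A.det = 0) (h' : (diagonal ![x, y] - A).det = 0) :
    A 0 0 = x * (y - A.trace) / (y - x) ∧ A 1 1 = y * (A.trace - x) / (y - x) := by
  rw [det_diagonal_sub_fin_two, h] at h'
  have hyx : y - x ≠ 0 := sub_ne_zero.mpr hxy.symm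
  rw [trace_fin_two, eq_div_iff hyx, eq_div_iff hyx]
  exact ⟨by linear_combination -h', by linear_combination h'⟩

theorem eq_of_det_eq_zero_fin_two {A : Matrix (Fin 2) (Fin 2) K} (h01 : A 0 1 ≠ 0)
    (h : A.det = 0) : A = !![A 0 0, A 0 1; A 0 0 * A 1 1 / A 0 1, A 1 1] := by
  have h10 : A 1 0 = A 0 0 * A 1 1 / A 0 1 := by
    rw [eq_div_iff h01]
    linear_combination det_fin_two A - h
  rw [← h10]
  exact eta_fin_two A

end Matrix

theorem stmt_9_general (α β γ : ℂ) (hαβ : α ≠ β)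
    (B₀ B₁ : Matrix (Fin 2) (Fin 2) ℂ)
    (ht0 : B₀.trace = 1 - γ) (hd0 : B₀.det = 0)
    (hd1 : B₁.det = 0)
    (hsum : B₀ + B₁ = Matrix.diagonal ![-α, -β])
    (h12 : B₀ 0 1 ≠ 0) :
    ∃ r₁ : ℂ, r₁ ≠ 0 ∧
      B₀ = !![α * (β + 1 - γ) / (α - β), r₁;
              α * β * (β + 1 - γ) * (γ - 1 - α) / ((α - β) ^ 2 * r₁),
              β * (γ - α - 1) / (α - β)] ∧
      B₁ = Matrix.diagonal ![-α, -β] - B₀ := by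
  have hB₁ : B₁ = diagonal ![-α, -β] - B₀ := eq_sub_of_add_eq' hsum
  obtain ⟨h00, h11⟩ := diag_fin_two_of_det_eq_zero_of_det_diagonal_sub_eq_zero
    (neg_injective.ne hαβ) hd0 (hB₁ ▸ hd1)
  rw [ht0, neg_sub_neg] at h00 h11
  have hαβ' : α - β ≠ 0 := sub_ne_zero.mpr hαβ
  have ha : B₀ 0 0 = α * (β + 1 - γ) / (α - β) := by
    rw [h00, div_eq_div_iff hαβ' hαβ']; ring
  have hd : B₀ 1 1 = β * (γ - α - 1) / (α - β) := by
    rw [h11, div_eq_div_iff hαβ' hαβ']; ring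
  have hc : B₀ 0 0 * B₀ 1 1 / B₀ 0 1 =
      α * β * (β + 1 - γ) * (γ - 1 - α) / ((α - β) ^ 2 * B₀ 0 1) := by
    rw [ha, hd]; field_simp; ring
  refine ⟨B₀ 0 1, h12, ?_, hB₁⟩
  conv_lhs => rw [eq_of_det_eq_zero_fin_two h12 hd0, hc, ha, hd]

/-- Lemma A4 (converse part): any pair `B₀` (eigenvalues `0, 1−γ`), `B₁` (eigenvalues
`0, γ−α−β−1`) with `B₀ + B₁ = diag(−α,−β)`, `α ≠ β`, `γ ≠ 1`, `γ−α−β−1 ≠ 0` and nonzero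
`(1,2)`-entry of `B₀`, is of the explicit form of Lemma A4 for some `r₁ ≠ 0`. -/
theorem stmt_9 (α β γ : ℂ) (hαβ : α ≠ β) (hγ : γ ≠ 1) (hγ' : γ - α - β - 1 ≠ 0)
    (B₀ B₁ : Matrix (Fin 2) (Fin 2) ℂ)
    (ht0 : B₀.trace = 1 - γ) (hd0 : B₀.det = 0)
    (ht1 : B₁.trace = γ - α - β - 1) (hd1 : B₁.det = 0)
    (hsum : B₀ + B₁ = Matrix.diagonal ![-α, -β])
    (h12 : B₀ 0 1 ≠ 0) :
    ∃ r₁ : ℂ, r₁ ≠ 0 ∧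
      B₀ = !![α * (β + 1 - γ) / (α - β), r₁;
              α * β * (β + 1 - γ) * (γ - 1 - α) / ((α - β) ^ 2 * r₁),
              β * (γ - α - 1) / (α - β)] ∧
      B₁ = Matrix.diagonal ![-α, -β] - B₀ :=
  stmt_9_general α β γ hαβ B₀ B₁ ht0 hd0 hd1 hsum h12
end
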